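/- arXiv:1712.05662 — 3 statements merged into one kernel-verified Lean document; each statement's English description precedes it below -/
import Mathlib

section
/- Under the standing assumptions, the recursively defined matrices M_n = W_n = A_n⁻¹C_{n−1}, W_i = I − A_i⁻¹B_iM_{i+1} and M_i = W_i⁻¹A_i⁻¹C_{i−1} (for i = n−1,…,2) are all invertible (in particular each W_i is invertible, so the recursion is well defined), and ‖M_i‖ ≤ ω_i for i = 2,…,n. -/
/-!
Row block diagonal dominance gives `‖A_i⁻¹C_{i-1}‖ + ‖A_i⁻¹B_i‖ ≤ 1`, and invertibility of
`A_i⁻¹C_{i-1}` makes its norm positive, so `‖A_i⁻¹B_i‖ < 1` and `ω_i ≤ 1`. Going down from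
`M_n`, the bound `‖M_{i+1}‖ ≤ ω_{i+1} ≤ 1` puts `A_i⁻¹B_iM_{i+1}` in the open unit ball, so
`W_i` is invertible by the Neumann series with `‖W_i⁻¹‖ ≤ (1 - ‖A_i⁻¹B_i‖)⁻¹`, which gives
`‖M_i‖ ≤ ω_i`.
-/

open scoped Matrix
attribute [local instance] Matrix.linftyOpNormedRing

/-- The block tridiagonal matrix with diagonal blocks `A 1, …, A n`, superdiagonal blocks
`B 1, …, B (n-1)` and subdiagonal blocks `C 1, …, C (n-1)`. -/
noncomputable def blockTridiag (n m : ℕ) (A B C : ℕ → Matrix (Fin m) (Fin m) ℂ) :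
    Matrix (Fin n × Fin m) (Fin n × Fin m) ℂ :=
  Matrix.of fun p q =>
    if p.1 = q.1 then A ((p.1 : ℕ) + 1) p.2 q.2
    else if (p.1 : ℕ) + 1 = (q.1 : ℕ) then B ((p.1 : ℕ) + 1) p.2 q.2
    else if (q.1 : ℕ) + 1 = (p.1 : ℕ) then C ((q.1 : ℕ) + 1) p.2 q.2
    else 0

open scoped Ring

-- The uniformity of the `L∞` operator norm is the product uniformity only up to unfolding,
-- which instance search does not see.
instance Matrix.linftyOp_completeSpace {n α : Type*} [Fintype n] [DecidableEq n] [NormedRing α]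
    [CompleteSpace α] : @CompleteSpace (Matrix n n α) PseudoMetricSpace.toUniformSpace :=
  (inferInstance : CompleteSpace (Matrix n n α))

theorem div_one_sub_le_one {a b : ℝ} (hb : b < 1) (hab : a + b ≤ 1) : a / (1 - b) ≤ 1 :=
  (div_le_one (sub_pos.2 hb)).2 (by linarith)

theorem norm_mul_le_of_norm_le_one_right {S : Type*} [NonUnitalSeminormedRing S] (p : S)
    {q : S} (hq : ‖q‖ ≤ 1) : ‖p * q‖ ≤ ‖p‖ :=
  (norm_mul_le p q).trans (mul_le_of_le_one_right (norm_nonneg p) hq)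

section BackwardRecursion

variable {R : Type*} [NormedRing R] [HasSummableGeomSeries R] [NormOneClass R]

theorem norm_ringInverse_one_sub_le {x : R} (hx : ‖x‖ < 1) : ‖(1 - x)⁻¹ʳ‖ ≤ (1 - ‖x‖)⁻¹ := by
  simpa [← geom_series_eq_inverse x hx] using tsum_geometric_le_of_norm_lt_one x hx

theorem norm_ringInverse_one_sub_mul_mul_le {p q : R} (hp : ‖p‖ < 1) (hq : ‖q‖ ≤ 1) (x : R) :
    ‖(1 - p * q)⁻¹ʳ * x‖ ≤ ‖x‖ / (1 - ‖p‖) := by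
  have hpq := norm_mul_le_of_norm_le_one_right p hq
  calc ‖(1 - p * q)⁻¹ʳ * x‖ ≤ ‖(1 - p * q)⁻¹ʳ‖ * ‖x‖ := norm_mul_le _ _
    _ ≤ (1 - ‖p‖)⁻¹ * ‖x‖ := by
      gcongr
      exact (norm_ringInverse_one_sub_le (hpq.trans_lt hp)).trans
        (inv_anti₀ (sub_pos.2 hp) (by linarith))
    _ = ‖x‖ / (1 - ‖p‖) := inv_mul_eq_div _ _

theorem norm_le_of_backward_recursion {l n : ℕ} {P X M : ℕ → R}
    (hP : ∀ i, l ≤ i → i ≤ n → ‖P i‖ < 1)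
    (hdom : ∀ i, l ≤ i → i ≤ n → ‖X i‖ + ‖P i‖ ≤ 1)
    (hMn : M n = X n) (hM : ∀ i, l ≤ i → i < n → M i = (1 - P i * M (i + 1))⁻¹ʳ * X i)
    {i : ℕ} (hli : l ≤ i) (hin : i ≤ n) : ‖M i‖ ≤ ‖X i‖ / (1 - ‖P i‖) := by
  induction hin using Nat.decreasingInduction with
  | self =>
    rw [hMn]
    exact le_div_self (norm_nonneg _) (sub_pos.2 (hP n hli le_rfl))
      (by linarith [norm_nonneg (P n)])
  | of_succ i hin ih =>
    have hMsucc : ‖M (i + 1)‖ ≤ 1 := (ih (by omega)).trans <|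
      div_one_sub_le_one (hP _ (by omega) hin) (hdom _ (by omega) hin)
    rw [hM i hli hin]
    exact norm_ringInverse_one_sub_mul_mul_le (hP i hli hin.le) hMsucc _

end BackwardRecursion

theorem M_W_invertible_and_norm_le_omega_general
    (n m : ℕ) (hm : 1 ≤ m)
    (A B C : ℕ → Matrix (Fin m) (Fin m) ℂ)
    (hC : ∀ i, 1 ≤ i → i ≤ n - 1 → IsUnit (C i))
    (hAi : ∀ i, 1 ≤ i → i ≤ n → IsUnit (A i))
    (hdom : ∀ i, 1 ≤ i → i ≤ n → ‖(A i)⁻¹ * C (i - 1)‖ + ‖(A i)⁻¹ * B i‖ ≤ 1)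
    (ω : ℕ → ℝ)
    (hω : ∀ i, 1 ≤ i → i ≤ n → ω i = ‖(A i)⁻¹ * C (i - 1)‖ / (1 - ‖(A i)⁻¹ * B i‖))
    (M W : ℕ → Matrix (Fin m) (Fin m) ℂ)
    (hMn : M n = (A n)⁻¹ * C (n - 1)) (hWn : W n = (A n)⁻¹ * C (n - 1))
    (hW : ∀ i, 2 ≤ i → i ≤ n - 1 → W i = 1 - (A i)⁻¹ * B i * M (i + 1))
    (hM : ∀ i, 2 ≤ i → i ≤ n - 1 → M i = (W i)⁻¹ * ((A i)⁻¹ * C (i - 1))) :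
    (∀ i, 2 ≤ i → i ≤ n → IsUnit (W i) ∧ IsUnit (M i)) ∧
    (∀ i, 2 ≤ i → i ≤ n → ‖M i‖ ≤ ω i) := by
  have : Nonempty (Fin m) := ⟨⟨0, hm⟩⟩
  have hX : ∀ i, 2 ≤ i → i ≤ n → IsUnit ((A i)⁻¹ * C (i - 1)) := fun i h2i hin =>
    (Matrix.isUnit_nonsing_inv_iff.2 (hAi i (by omega) hin)).mul (hC _ (by omega) (by omega))
  have hP : ∀ i, 2 ≤ i → i ≤ n → ‖(A i)⁻¹ * B i‖ < 1 := fun i h2i hin => by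
    linarith [hdom i (by omega) hin, norm_pos_iff.2 (hX i h2i hin).ne_zero]
  have hnorm : ∀ i, 2 ≤ i → i ≤ n → ‖M i‖ ≤ ‖(A i)⁻¹ * C (i - 1)‖ / (1 - ‖(A i)⁻¹ * B i‖) :=
    fun i h2i hin => norm_le_of_backward_recursion hP (fun j h2j hjn => hdom j (by omega) hjn)
      hMn (fun j h2j hjn => by
        rw [hM j h2j (by omega), hW j h2j (by omega), Matrix.nonsing_inv_eq_ringInverse])
      h2i hin
  have hWunit : ∀ i, 2 ≤ i → i ≤ n → IsUnit (W i) := by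
    intro i h2i hin
    rcases hin.lt_or_eq with hin | rfl
    · have hM1 : ‖M (i + 1)‖ ≤ 1 := (hnorm _ (by omega) hin).trans <|
        div_one_sub_le_one (hP _ (by omega) hin) (hdom _ (by omega) hin)
      rw [hW i h2i (by omega)]
      exact isUnit_one_sub_of_norm_lt_one <|
        (norm_mul_le_of_norm_le_one_right _ hM1).trans_lt (hP i h2i hin.le)
    · exact hWn ▸ hX i h2i le_rfl
  refine ⟨fun i h2i hin => ⟨hWunit i h2i hin, ?_⟩,
    fun i h2i hin => hω i (by omega) hin ▸ hnorm i h2i hin⟩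
  rcases hin.lt_or_eq with hin | rfl
  · exact hM i h2i (by omega) ▸
      (Matrix.isUnit_nonsing_inv_iff.2 (hWunit i h2i hin.le)).mul (hX i h2i hin.le)
  · exact hMn ▸ hX i h2i le_rfl

theorem M_W_invertible_and_norm_le_omega
    (n m : ℕ) (hn : 2 ≤ n) (hm : 1 ≤ m)
    (A B C : ℕ → Matrix (Fin m) (Fin m) ℂ)
    (hC0 : C 0 = 0) (hBn : B n = 0)
    (hAinv : IsUnit (blockTridiag n m A B C))
    (hB : ∀ i, 1 ≤ i → i ≤ n - 1 → IsUnit (B i))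
    (hC : ∀ i, 1 ≤ i → i ≤ n - 1 → IsUnit (C i))
    (hAi : ∀ i, 1 ≤ i → i ≤ n → IsUnit (A i))
    (hdom : ∀ i, 1 ≤ i → i ≤ n → ‖(A i)⁻¹ * C (i - 1)‖ + ‖(A i)⁻¹ * B i‖ ≤ 1)
    (hB1 : ‖(A 1)⁻¹ * B 1‖ < 1)
    (hCn : ‖(A n)⁻¹ * C (n - 1)‖ < 1)
    (ω : ℕ → ℝ)
    (hω : ∀ i, 1 ≤ i → i ≤ n → ω i = ‖(A i)⁻¹ * C (i - 1)‖ / (1 - ‖(A i)⁻¹ * B i‖))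
    (M W : ℕ → Matrix (Fin m) (Fin m) ℂ)
    (hMn : M n = (A n)⁻¹ * C (n - 1)) (hWn : W n = (A n)⁻¹ * C (n - 1))
    (hW : ∀ i, 2 ≤ i → i ≤ n - 1 → W i = 1 - (A i)⁻¹ * B i * M (i + 1))
    (hM : ∀ i, 2 ≤ i → i ≤ n - 1 → M i = (W i)⁻¹ * ((A i)⁻¹ * C (i - 1))) :
    (∀ i, 2 ≤ i → i ≤ n → IsUnit (W i) ∧ IsUnit (M i)) ∧
    (∀ i, 2 ≤ i → i ≤ n → ‖M i‖ ≤ ω i) :=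
  M_W_invertible_and_norm_le_omega_general n m hm A B C hC hAi hdom ω hω M W hMn hWn hW hM
end

section
/- Under the standing assumptions, the diagonal blocks Z_{ii} of the inverse A⁻¹ satisfy ‖I‖/(‖A_i‖ + τ_{i−1}‖C_{i−1}‖ + ω_{i+1}‖B_i‖) ≤ ‖Z_{ii}‖ for i = 1,…,n, where C_0 = B_n = 0 and τ_0 = ω_{n+1} = 0. -/
/-!
Reading `M * M⁻¹ = 1` block row by block row, the blocks of `Z = M⁻¹` satisfy
`C (i-1) Z (i-1) j + A i Z i j + B i Z (i+1) j = δ i j`. Off the diagonal, multiplying by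
`(A i)⁻¹` gives `‖Z i j‖ ≤ a i ‖Z (i-1) j‖ + b i ‖Z (i+1) j‖` with `a i = ‖(A i)⁻¹ C (i-1)‖` and
`b i = ‖(A i)⁻¹ B i‖`. As `B i ≠ 0` (resp. `C (i-1) ≠ 0`), dominance `a i + b i ≤ 1` forces
`a i < 1` and `τ i ≤ 1` (resp. `b i < 1` and `ω i ≤ 1`). Above the diagonal, induction from the first row (where `C 0 = 0`)
gives `‖Z i j‖ ≤ τ i ‖Z (i+1) j‖`: the previous step bounds `‖Z (i-1) j‖` by `‖Z i j‖`, so the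
`a i` term can be absorbed. Symmetrically, induction from the last row gives
`‖Z i j‖ ≤ ω i ‖Z (i-1) j‖` below the diagonal. Taking norms in the diagonal equation and inserting
the two decay bounds yields `‖I‖ ≤ (‖A i‖ + τ (i-1) ‖C (i-1)‖ + ω (i+1) ‖B i‖) ‖Z i i‖`.
-/

open scoped Matrix
attribute [local instance] Matrix.linftyOpNormedRing

open scoped Ring

theorem le_div_one_sub_mul_of_le_add {a b x y z : ℝ} (ha : a < 1) (h : x ≤ a * y + b * z)
    (hy : a * y ≤ a * x) : x ≤ b / (1 - a) * z := by
  rw [div_mul_eq_mul_div, le_div_iff₀ (by linarith)]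
  linarith

theorem le_div_one_sub_mul_succ {N : ℕ} {x a b : ℕ → ℝ} (hx : ∀ i, 0 ≤ x i) (ha : ∀ i, 0 ≤ a i)
    (hlt : ∀ i, 1 ≤ i → i < N → a i < 1) (hab : ∀ i, 1 ≤ i → i < N → a i + b i ≤ 1)
    (h0 : a 1 * x 0 = 0)
    (hrec : ∀ i, 1 ≤ i → i < N → x i ≤ a i * x (i - 1) + b i * x (i + 1)) :
    ∀ i, 1 ≤ i → i < N → x i ≤ b i / (1 - a i) * x (i + 1) := by
  intro i hi
  induction i, hi using Nat.le_induction with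
  | base =>
    intro hN
    exact le_div_one_sub_mul_of_le_add (hlt 1 le_rfl hN) (hrec 1 le_rfl hN)
      (h0.trans_le (mul_nonneg (ha 1) (hx 1)))
  | succ i hi ih =>
    intro hN
    have hratio : b i / (1 - a i) ≤ 1 :=
      div_le_one_of_le₀ (by linarith [hab i hi (by omega)]) (by linarith [hlt i hi (by omega)])
    have hmono : x i ≤ x (i + 1) :=
      (ih (by omega)).trans (mul_le_of_le_one_left (hx _) hratio)
    exact le_div_one_sub_mul_of_le_add (hlt _ (by omega) hN) (hrec _ (by omega) hN)
      (mul_le_mul_of_nonneg_left hmono (ha _))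

theorem le_div_one_sub_mul_pred {N n : ℕ} {x a b : ℕ → ℝ} (hx : ∀ i, 0 ≤ x i)
    (hb : ∀ i, 0 ≤ b i)
    (hlt : ∀ i, N < i → i ≤ n → b i < 1) (hab : ∀ i, N < i → i ≤ n → a i + b i ≤ 1)
    (h0 : b n * x (n + 1) = 0)
    (hrec : ∀ i, N < i → i ≤ n → x i ≤ a i * x (i - 1) + b i * x (i + 1)) :
    ∀ i, N < i → i ≤ n → x i ≤ a i / (1 - b i) * x (i - 1) := by
  have key := le_div_one_sub_mul_succ (N := n + 1 - N) (x := fun k => x (n + 1 - k))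
    (a := fun k => b (n + 1 - k)) (b := fun k => a (n + 1 - k)) (fun _ => hx _) (fun _ => hb _)
    (fun k hk hkN => hlt _ (by omega) (by omega))
    (fun k hk hkN => by rw [add_comm]; exact hab _ (by omega) (by omega))
    (by simpa using h0)
    (fun k hk hkN => by
      have := hrec (n + 1 - k) (by omega) (by omega)
      rwa [show n + 1 - k - 1 = n + 1 - (k + 1) by omega,
        show n + 1 - k + 1 = n + 1 - (k - 1) by omega, add_comm (a _ * _)] at this)
  intro i hNi hin
  have := key (n + 1 - i) (by omega) (by omega)
  rwa [show n + 1 - (n + 1 - i) = i by omega, show n + 1 - (n + 1 - i + 1) = i - 1 by omega] at this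

section NormedRing

variable {R : Type*} [NormedRing R]

theorem norm_le_of_row_eq_zero {a b c x y z : R} (ha : IsUnit a)
    (h : c * y + a * x + b * z = 0) :
    ‖x‖ ≤ ‖a⁻¹ʳ * c‖ * ‖y‖ + ‖a⁻¹ʳ * b‖ * ‖z‖ := by
  have hx : x = -(a⁻¹ʳ * c * y + a⁻¹ʳ * b * z) := by
    have := congrArg (a⁻¹ʳ * ·) h
    simp only [mul_add, ← mul_assoc, Ring.inverse_mul_cancel a ha, one_mul, mul_zero] at this
    rw [eq_neg_iff_add_eq_zero, ← this]
    abel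
  rw [hx, norm_neg]
  exact (norm_add_le _ _).trans (add_le_add (norm_mul_le _ _) (norm_mul_le _ _))

theorem norm_inverse_mul_lt_one [Nontrivial R] {a b c : R} (ha : IsUnit a) (hb : IsUnit b)
    (h : ‖a⁻¹ʳ * c‖ + ‖a⁻¹ʳ * b‖ ≤ 1) : ‖a⁻¹ʳ * c‖ < 1 := by
  have : 0 < ‖a⁻¹ʳ * b‖ := norm_pos_iff.2 (ha.ringInverse.mul hb).ne_zero
  linarith

theorem norm_one_le_of_row_eq_one {a b c x y z : R} {s t : ℝ} (h : c * y + a * x + b * z = 1)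
    (hy : ‖c * y‖ ≤ s * ‖c‖ * ‖x‖) (hz : ‖b * z‖ ≤ t * ‖b‖ * ‖x‖) :
    ‖(1 : R)‖ ≤ (‖a‖ + s * ‖c‖ + t * ‖b‖) * ‖x‖ := by
  calc ‖(1 : R)‖ ≤ ‖c * y‖ + ‖a * x‖ + ‖b * z‖ := h ▸ norm_add₃_le
    _ ≤ s * ‖c‖ * ‖x‖ + ‖a‖ * ‖x‖ + t * ‖b‖ * ‖x‖ := by gcongr; exact norm_mul_le _ _
    _ = (‖a‖ + s * ‖c‖ + t * ‖b‖) * ‖x‖ := by ring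

end NormedRing

section Tridiagonal

variable {R : Type*} [NormedRing R] {n : ℕ} {A B C : ℕ → R} {Z : ℕ → ℕ → R}

/-- Blocks are indexed from `1`; the junk blocks `Z 0 j` and `Z (n + 1) j` are multiplied by
`C 0` and `B n`, which vanish in the applications. -/
def IsTridiagRightInverse (n : ℕ) (A B C : ℕ → R) (Z : ℕ → ℕ → R) : Prop :=
  ∀ i j, 1 ≤ i → i ≤ n → 1 ≤ j → j ≤ n →
    C (i - 1) * Z (i - 1) j + A i * Z i j + B i * Z (i + 1) j = if i = j then 1 else 0

namespace IsTridiagRightInverse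

theorem norm_le (hZ : IsTridiagRightInverse n A B C Z) (hA : ∀ i, 1 ≤ i → i ≤ n → IsUnit (A i))
    {i j : ℕ} (hi : 1 ≤ i) (hin : i ≤ n) (hj : 1 ≤ j) (hjn : j ≤ n) (hij : i ≠ j) :
    ‖Z i j‖ ≤ ‖(A i)⁻¹ʳ * C (i - 1)‖ * ‖Z (i - 1) j‖ + ‖(A i)⁻¹ʳ * B i‖ * ‖Z (i + 1) j‖ :=
  norm_le_of_row_eq_zero (hA i hi hin) (by simpa [hij] using hZ i j hi hin hj hjn)

theorem norm_le_succ [Nontrivial R] (hZ : IsTridiagRightInverse n A B C Z)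
    (hA : ∀ i, 1 ≤ i → i ≤ n → IsUnit (A i)) (hB : ∀ i, 1 ≤ i → i < n → IsUnit (B i))
    (hC0 : C 0 = 0)
    (hdom : ∀ i, 1 ≤ i → i ≤ n → ‖(A i)⁻¹ʳ * C (i - 1)‖ + ‖(A i)⁻¹ʳ * B i‖ ≤ 1)
    {i j : ℕ} (hi : 1 ≤ i) (hij : i < j) (hjn : j ≤ n) :
    ‖Z i j‖ ≤ ‖(A i)⁻¹ʳ * B i‖ / (1 - ‖(A i)⁻¹ʳ * C (i - 1)‖) * ‖Z (i + 1) j‖ :=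
  le_div_one_sub_mul_succ (N := j) (x := fun k => ‖Z k j‖) (fun _ => norm_nonneg _)
    (fun _ => norm_nonneg _)
    (fun k hk hkj => norm_inverse_mul_lt_one (hA k hk (by omega)) (hB k hk (by omega))
      (hdom k hk (by omega)))
    (fun k hk hkj => hdom k hk (by omega)) (by simp [hC0])
    (fun k hk hkj => hZ.norm_le hA hk (by omega) (by omega) hjn (by omega)) i hi hij

theorem norm_le_pred [Nontrivial R] (hZ : IsTridiagRightInverse n A B C Z)
    (hA : ∀ i, 1 ≤ i → i ≤ n → IsUnit (A i)) (hC : ∀ i, 1 ≤ i → i < n → IsUnit (C i))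
    (hBn : B n = 0)
    (hdom : ∀ i, 1 ≤ i → i ≤ n → ‖(A i)⁻¹ʳ * C (i - 1)‖ + ‖(A i)⁻¹ʳ * B i‖ ≤ 1)
    {i j : ℕ} (hj : 1 ≤ j) (hji : j < i) (hin : i ≤ n) :
    ‖Z i j‖ ≤ ‖(A i)⁻¹ʳ * C (i - 1)‖ / (1 - ‖(A i)⁻¹ʳ * B i‖) * ‖Z (i - 1) j‖ :=
  le_div_one_sub_mul_pred (N := j) (n := n) (x := fun k => ‖Z k j‖) (fun _ => norm_nonneg _)
    (fun _ => norm_nonneg _)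
    (fun k hjk hkn => norm_inverse_mul_lt_one (hA k (by omega) hkn)
      (hC (k - 1) (by omega) (by omega)) ((add_comm _ _).trans_le (hdom k (by omega) hkn)))
    (fun k hjk hkn => hdom k (by omega) hkn) (by simp [hBn])
    (fun k hjk hkn => hZ.norm_le hA (by omega) hkn hj (by omega) (by omega)) i hji hin

theorem norm_one_div_le_norm_diag [Nontrivial R] (hZ : IsTridiagRightInverse n A B C Z)
    (hA : ∀ i, 1 ≤ i → i ≤ n → IsUnit (A i)) (hB : ∀ i, 1 ≤ i → i < n → IsUnit (B i))
    (hC : ∀ i, 1 ≤ i → i < n → IsUnit (C i)) (hC0 : C 0 = 0) (hBn : B n = 0)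
    (hdom : ∀ i, 1 ≤ i → i ≤ n → ‖(A i)⁻¹ʳ * C (i - 1)‖ + ‖(A i)⁻¹ʳ * B i‖ ≤ 1)
    {τ ω : ℕ → ℝ}
    (hτ : ∀ i, 1 ≤ i → i ≤ n → τ i = ‖(A i)⁻¹ʳ * B i‖ / (1 - ‖(A i)⁻¹ʳ * C (i - 1)‖))
    (hω : ∀ i, 1 ≤ i → i ≤ n → ω i = ‖(A i)⁻¹ʳ * C (i - 1)‖ / (1 - ‖(A i)⁻¹ʳ * B i‖))
    {i : ℕ} (hi : 1 ≤ i) (hin : i ≤ n) :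
    ‖(1 : R)‖ / (‖A i‖ + τ (i - 1) * ‖C (i - 1)‖ + ω (i + 1) * ‖B i‖) ≤ ‖Z i i‖ := by
  have hlower : ‖C (i - 1) * Z (i - 1) i‖ ≤ τ (i - 1) * ‖C (i - 1)‖ * ‖Z i i‖ := by
    rcases Nat.lt_or_ge 1 i with hi1 | hi1
    · have hdecay := hZ.norm_le_succ hA hB hC0 hdom (i := i - 1) (by omega) (by omega) hin
      rw [← hτ _ (by omega) (by omega), Nat.sub_add_cancel hi] at hdecay
      calc ‖C (i - 1) * Z (i - 1) i‖ ≤ ‖C (i - 1)‖ * (τ (i - 1) * ‖Z i i‖) :=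
            (norm_mul_le _ _).trans (by gcongr)
        _ = τ (i - 1) * ‖C (i - 1)‖ * ‖Z i i‖ := by ring
    · simp [show i - 1 = 0 by omega, hC0]
  have hupper : ‖B i * Z (i + 1) i‖ ≤ ω (i + 1) * ‖B i‖ * ‖Z i i‖ := by
    rcases Nat.lt_or_ge i n with hin' | hin'
    · have hdecay := hZ.norm_le_pred hA hC hBn hdom (i := i + 1) hi (by omega) hin'
      rw [← hω _ (by omega) hin', Nat.add_sub_cancel] at hdecay
      calc ‖B i * Z (i + 1) i‖ ≤ ‖B i‖ * (ω (i + 1) * ‖Z i i‖) :=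
            (norm_mul_le _ _).trans (by gcongr)
        _ = ω (i + 1) * ‖B i‖ * ‖Z i i‖ := by ring
    · simp [show i = n by omega, hBn]
  have hkey := norm_one_le_of_row_eq_one (by simpa using hZ i i hi hin hi hin) hlower hupper
  rcases le_total (‖A i‖ + τ (i - 1) * ‖C (i - 1)‖ + ω (i + 1) * ‖B i‖) 0 with hD | hD
  · exact (div_nonpos_of_nonneg_of_nonpos (norm_nonneg _) hD).trans (norm_nonneg _)
  · exact div_le_of_le_mul₀ hD (norm_nonneg _) (by linarith)

end IsTridiagRightInverse

end Tridiagonal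

theorem sum_range_tridiag_mul {R : Type*} [NonUnitalNonAssocSemiring R] {n i : ℕ} (hi : i < n)
    {A B C : ℕ → R} (hC0 : C 0 = 0) (hBn : B n = 0) (x : ℕ → R) :
    ∑ r ∈ Finset.range n, ((if r = i then A (i + 1) else 0) + (if r = i + 1 then B (i + 1) else 0) +
        (if r + 1 = i then C (r + 1) else 0)) * x (r + 1) =
      C i * x i + A (i + 1) * x (i + 1) + B (i + 1) * x (i + 1 + 1) := by
  simp only [add_mul, ite_mul, zero_mul, Finset.sum_add_distrib, Finset.sum_ite_eq',
    Finset.mem_range, if_pos hi]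
  have hB : (if i + 1 < n then B (i + 1) * x (i + 2) else 0) = B (i + 1) * x (i + 1 + 1) := by
    split_ifs with h
    · rfl
    · rw [show i + 1 = n by omega, hBn, zero_mul]
  have hC : ∑ r ∈ Finset.range n, (if r + 1 = i then C (r + 1) * x (r + 1) else 0) = C i * x i := by
    cases i with
    | zero => simp [hC0]
    | succ i => simp [Finset.sum_ite_eq', show i < n by omega]
  rw [hB, hC]
  abel

theorem comp_symm_blockTridiag_apply {n m : ℕ} (A B C : ℕ → Matrix (Fin m) (Fin m) ℂ)
    (i r : Fin n) :
    (Matrix.comp _ _ _ _ ℂ).symm (blockTridiag n m A B C) i r =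
      (if (r : ℕ) = i then A (i + 1) else 0) + (if (r : ℕ) = i + 1 then B (i + 1) else 0) +
        (if (r : ℕ) + 1 = i then C (r + 1) else 0) := by
  ext k l
  simp only [blockTridiag, Matrix.comp_symm_apply, Matrix.of_apply, Matrix.add_apply, Fin.ext_iff]
  split_ifs <;> first | omega | simp

theorem isTridiagRightInverse_of_blockTridiag_mul_eq_one {n m : ℕ}
    {A B C : ℕ → Matrix (Fin m) (Fin m) ℂ} (hC0 : C 0 = 0) (hBn : B n = 0)
    {W : Matrix (Fin n × Fin m) (Fin n × Fin m) ℂ} (hW : blockTridiag n m A B C * W = 1)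
    {Z : ℕ → ℕ → Matrix (Fin m) (Fin m) ℂ}
    (hZ : ∀ i j : Fin n, Z ((i : ℕ) + 1) ((j : ℕ) + 1) = Matrix.of fun k l => W (i, k) (j, l)) :
    IsTridiagRightInverse n A B C Z := by
  intro i j hi hin hj hjn
  obtain ⟨i, rfl⟩ : ∃ i', i = i' + 1 := ⟨i - 1, by omega⟩
  obtain ⟨j, rfl⟩ : ∃ j', j = j' + 1 := ⟨j - 1, by omega⟩
  have h := congr_fun (congr_fun (congrArg (Matrix.compRingEquiv (Fin n) (Fin m) ℂ).symm hW)
    ⟨i, by omega⟩) ⟨j, by omega⟩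
  rw [map_mul, map_one, Matrix.mul_apply, Matrix.one_apply] at h
  simp only [Matrix.compRingEquiv_symm_apply, comp_symm_blockTridiag_apply] at h
  have hWZ : ∀ r : Fin n, (Matrix.comp _ _ _ _ ℂ).symm W r ⟨j, by omega⟩ = Z (r + 1) (j + 1) :=
    fun r => (hZ r _).symm
  simp only [hWZ] at h
  have hrow := sum_range_tridiag_mul (A := A) (by omega : i < n) hC0 hBn (fun r => Z r (j + 1))
  rw [Finset.sum_range, h] at hrow
  simpa [Fin.ext_iff] using hrow.symm

theorem diag_block_lower_bound_general
    (n m : ℕ) (hm : 1 ≤ m)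
    (A B C : ℕ → Matrix (Fin m) (Fin m) ℂ)
    (hC0 : C 0 = 0) (hBn : B n = 0)
    (hAinv : IsUnit (blockTridiag n m A B C))
    (hB : ∀ i, 1 ≤ i → i ≤ n - 1 → IsUnit (B i))
    (hC : ∀ i, 1 ≤ i → i ≤ n - 1 → IsUnit (C i))
    (hAi : ∀ i, 1 ≤ i → i ≤ n → IsUnit (A i))
    (hdom : ∀ i, 1 ≤ i → i ≤ n → ‖(A i)⁻¹ * C (i - 1)‖ + ‖(A i)⁻¹ * B i‖ ≤ 1)
    (τ : ℕ → ℝ)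
    (hτ : ∀ i, 1 ≤ i → i ≤ n → τ i = ‖(A i)⁻¹ * B i‖ / (1 - ‖(A i)⁻¹ * C (i - 1)‖))
    (ω : ℕ → ℝ)
    (hω : ∀ i, 1 ≤ i → i ≤ n → ω i = ‖(A i)⁻¹ * C (i - 1)‖ / (1 - ‖(A i)⁻¹ * B i‖))
    (Z : ℕ → ℕ → Matrix (Fin m) (Fin m) ℂ)
    (hZ : ∀ i j : Fin n, Z ((i : ℕ) + 1) ((j : ℕ) + 1) =
      Matrix.of fun k l => (blockTridiag n m A B C)⁻¹ (i, k) (j, l)) :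
    ∀ i, 1 ≤ i → i ≤ n →
      ‖(1 : Matrix (Fin m) (Fin m) ℂ)‖ /
        (‖A i‖ + τ (i - 1) * ‖C (i - 1)‖ + ω (i + 1) * ‖B i‖) ≤ ‖Z i i‖ := by
  intro i hi hin
  have : Nonempty (Fin m) := ⟨⟨0, hm⟩⟩
  have hW := Matrix.mul_nonsing_inv _ ((Matrix.isUnit_iff_isUnit_det _).mp hAinv)
  have hZinv := isTridiagRightInverse_of_blockTridiag_mul_eq_one hC0 hBn hW hZ
  simp only [Matrix.nonsing_inv_eq_ringInverse] at hdom hτ hω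
  exact hZinv.norm_one_div_le_norm_diag hAi (fun k hk hkn => hB k hk (by omega))
    (fun k hk hkn => hC k hk (by omega)) hC0 hBn hdom hτ hω hi hin

theorem diag_block_lower_bound
    (n m : ℕ) (hn : 2 ≤ n) (hm : 1 ≤ m)
    (A B C : ℕ → Matrix (Fin m) (Fin m) ℂ)
    (hC0 : C 0 = 0) (hBn : B n = 0)
    (hAinv : IsUnit (blockTridiag n m A B C))
    (hB : ∀ i, 1 ≤ i → i ≤ n - 1 → IsUnit (B i))
    (hC : ∀ i, 1 ≤ i → i ≤ n - 1 → IsUnit (C i))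
    (hAi : ∀ i, 1 ≤ i → i ≤ n → IsUnit (A i))
    (hdom : ∀ i, 1 ≤ i → i ≤ n → ‖(A i)⁻¹ * C (i - 1)‖ + ‖(A i)⁻¹ * B i‖ ≤ 1)
    (hB1 : ‖(A 1)⁻¹ * B 1‖ < 1)
    (hCn : ‖(A n)⁻¹ * C (n - 1)‖ < 1)
    (τ : ℕ → ℝ)
    (hτ : ∀ i, 1 ≤ i → i ≤ n → τ i = ‖(A i)⁻¹ * B i‖ / (1 - ‖(A i)⁻¹ * C (i - 1)‖))
    (ω : ℕ → ℝ)
    (hω : ∀ i, 1 ≤ i → i ≤ n → ω i = ‖(A i)⁻¹ * C (i - 1)‖ / (1 - ‖(A i)⁻¹ * B i‖))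
    (hτ0 : τ 0 = 0)
    (hωn1 : ω (n + 1) = 0)
    (Z : ℕ → ℕ → Matrix (Fin m) (Fin m) ℂ)
    (hZ : ∀ i j : Fin n, Z ((i : ℕ) + 1) ((j : ℕ) + 1) =
      Matrix.of fun k l => (blockTridiag n m A B C)⁻¹ (i, k) (j, l)) :
    ∀ i, 1 ≤ i → i ≤ n →
      ‖(1 : Matrix (Fin m) (Fin m) ℂ)‖ /
        (‖A i‖ + τ (i - 1) * ‖C (i - 1)‖ + ω (i + 1) * ‖B i‖) ≤ ‖Z i i‖ :=
  diag_block_lower_bound_general n m hm A B C hC0 hBn hAinv hB hC hAi hdom τ hτ ω hω Z hZ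
end

section
/- Under the standing assumptions, for each t = 1,…,n−1, the blocks Z_{ij} of the inverse A⁻¹ satisfy ‖Z_{ij}‖ ≤ ‖Z_{jj}‖ · ∏_{k=j+1}^{i} ω_{k,t} for all i > j. -/
open scoped Matrix
attribute [local instance] Matrix.linftyOpNormedRing

/-!
Comparing the `(i, j)` blocks of `A A⁻¹ = I` for `i > j` gives the three-term inequality
`‖Z i j‖ ≤ cᵢ ‖Z (i-1) j‖ + bᵢ ‖Z (i+1) j‖`, where `cᵢ = ‖Aᵢ⁻¹ Cᵢ₋₁‖` and `bᵢ = ‖Aᵢ⁻¹ Bᵢ‖`.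
Once a ratio bound `‖Z (i+1) j‖ ≤ ρ ‖Z i j‖` with `ρ ≤ 1` is known, this absorbs into
`‖Z i j‖ ≤ cᵢ / (1 - bᵢ ρ) ‖Z (i-1) j‖`. Sweeping upwards from the last block row (where `bₙ = 0`)
with `ρ = 1` yields the ratios `ωᵢ`; every further pass feeds in the ratios of the previous pass,
which is the recursion defining `ω_{i,t}`. Diagonal dominance keeps all ratios in `[0, 1]`, and
chaining them from row `j + 1` to row `i` gives the bound.
-/

theorem Matrix.comp_symm_mul_apply {I J R : Type*} [Fintype I] [Fintype J] [Semiring R]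
    (M N : Matrix (I × J) (I × J) R) (i k : I) :
    (Matrix.comp I I J J R).symm (M * N) i k =
      ∑ p, (Matrix.comp I I J J R).symm M i p * (Matrix.comp I I J J R).symm N p k := by
  rw [← Matrix.compRingEquiv_symm_apply, map_mul, Matrix.mul_apply]
  rfl

theorem comp_symm_blockTridiag (n m : ℕ) (A B C : ℕ → Matrix (Fin m) (Fin m) ℂ) (i p : Fin n) :
    (Matrix.comp _ _ _ _ ℂ).symm (blockTridiag n m A B C) i p =
      if i = p then A (i + 1) else if (i : ℕ) + 1 = p then B (i + 1)
      else if (p : ℕ) + 1 = i then C (p + 1) else 0 := by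
  ext k l
  simp only [Matrix.comp_symm_apply, blockTridiag, Matrix.of_apply]
  split_ifs <;> rfl

theorem blockTridiag_mul_block {n m : ℕ} {A B C : ℕ → Matrix (Fin m) (Fin m) ℂ} (hBn : B n = 0)
    {W : Matrix (Fin n × Fin m) (Fin n × Fin m) ℂ} {Z : ℕ → ℕ → Matrix (Fin m) (Fin m) ℂ}
    (hZ : ∀ i j : Fin n, Z ((i : ℕ) + 1) ((j : ℕ) + 1) = Matrix.of fun k l => W (i, k) (j, l))
    {i : ℕ} (i' j : Fin n) (hi : (i' : ℕ) + 1 = i) (hi1 : 1 ≤ (i' : ℕ)) :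
    (Matrix.comp _ _ _ _ ℂ).symm (blockTridiag n m A B C * W) i' j =
      C (i - 1) * Z (i - 1) (j + 1) + A i * Z i (j + 1) + B i * Z (i + 1) (j + 1) := by
  set f : ℕ → Matrix (Fin m) (Fin m) ℂ := fun p =>
    (if p = i - 2 then C (i - 1) * Z (i - 1) (j + 1) else 0) +
    (if p = i - 1 then A i * Z i (j + 1) else 0) +
    (if p = i then B i * Z (i + 1) (j + 1) else 0) with hf
  have hblock : ∀ p : Fin n, (Matrix.comp _ _ _ _ ℂ).symm (blockTridiag n m A B C) i' p *
      (Matrix.comp _ _ _ _ ℂ).symm W p j = f p := by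
    intro p
    have hWp : (Matrix.comp _ _ _ _ ℂ).symm W p j = Z (p + 1) (j + 1) := (hZ p j).symm
    rw [comp_symm_blockTridiag, hWp, hf]
    subst hi
    simp only [Fin.ext_iff]
    split_ifs <;> first | omega | simp only [zero_add, add_zero, zero_mul] <;> congr 2 <;> omega
  rw [Matrix.comp_symm_mul_apply, Finset.sum_congr rfl fun p _ => hblock p,
    Fin.sum_univ_eq_sum_range f n]
  simp only [hf, Finset.sum_add_distrib, Finset.sum_ite_eq', Finset.mem_range]
  rw [if_pos (by omega), if_pos (by omega)]
  rcases Nat.lt_or_ge i n with hin | hin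
  · rw [if_pos hin]
  · rw [if_neg (by omega), show i = n by omega, hBn, zero_mul]

theorem blockTridiag_inv_block_recurrence {n m : ℕ} {A B C : ℕ → Matrix (Fin m) (Fin m) ℂ}
    (hBn : B n = 0) (hM : IsUnit (blockTridiag n m A B C)) {Z : ℕ → ℕ → Matrix (Fin m) (Fin m) ℂ}
    (hZ : ∀ i j : Fin n, Z ((i : ℕ) + 1) ((j : ℕ) + 1) =
      Matrix.of fun k l => (blockTridiag n m A B C)⁻¹ (i, k) (j, l))
    {i j : ℕ} (hi : 2 ≤ i) (hin : i ≤ n) (hj : 1 ≤ j) (hjn : j ≤ n) (hij : i ≠ j) :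
    C (i - 1) * Z (i - 1) j + A i * Z i j + B i * Z (i + 1) j = 0 := by
  have hblock := blockTridiag_mul_block (A := A) (C := C) (i := i) hBn hZ
    ⟨i - 1, by omega⟩ ⟨j - 1, by omega⟩ (by simp only; omega) (by simp only; omega)
  rw [Matrix.mul_nonsing_inv _ ((Matrix.isUnit_iff_isUnit_det _).mp hM),
    ← Matrix.compRingEquiv_symm_apply, map_one,
    Matrix.one_apply_ne (by simp only [ne_eq, Fin.ext_iff]; omega)] at hblock
  simpa [Nat.sub_add_cancel hj] using hblock.symm

theorem norm_le_of_mul_add_mul_add_mul_eq_zero {R : Type*} [NormedRing R] {a a' b c y z w : R}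
    (ha : a' * a = 1) (h : c * y + a * z + b * w = 0) :
    ‖z‖ ≤ ‖a' * c‖ * ‖y‖ + ‖a' * b‖ * ‖w‖ := by
  have hz : z = -(a' * c * y + a' * b * w) := by
    have := congrArg (a' * ·) h
    simp only [mul_add, mul_zero, ← mul_assoc, ha, one_mul] at this
    rw [eq_neg_iff_add_eq_zero, ← this]
    abel
  calc ‖z‖ ≤ ‖a' * c * y‖ + ‖a' * b * w‖ := by rw [hz, norm_neg]; exact norm_add_le _ _
    _ ≤ ‖a' * c‖ * ‖y‖ + ‖a' * b‖ * ‖w‖ := add_le_add (norm_mul_le _ _) (norm_mul_le _ _)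

theorem norm_lt_one_of_isUnit_of_norm_add_le_one {R : Type*} [NormedRing R] {u v : R}
    (hu : IsUnit u) (h : ‖u‖ + ‖v‖ ≤ 1) : ‖v‖ < 1 := by
  rcases subsingleton_or_nontrivial R with _ | _
  · simp [Subsingleton.elim v 0]
  · linarith [norm_pos_iff.mpr hu.ne_zero]

theorem le_div_one_sub_mul_mul_of_le_add_mul {x y z b c ρ : ℝ} (hx : x ≤ c * y + b * z)
    (hb : 0 ≤ b) (hz : z ≤ ρ * x) (hbρ : b * ρ < 1) : x ≤ c / (1 - b * ρ) * y := by
  rw [div_mul_eq_mul_div, le_div_iff₀ (by linarith)]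
  nlinarith [mul_le_mul_of_nonneg_left hz hb]

theorem div_one_sub_mul_mem_Icc {b c ρ : ℝ} (hc : 0 ≤ c) (hb : 0 ≤ b) (hcb : c + b ≤ 1)
    (hb1 : b < 1) (hρ : ρ ∈ Set.Icc (0 : ℝ) 1) : c / (1 - b * ρ) ∈ Set.Icc (0 : ℝ) 1 := by
  have hbρ : b * ρ ≤ b := mul_le_of_le_one_right hb hρ.2
  have hbρ0 : 0 ≤ b * ρ := mul_nonneg hb hρ.1
  exact ⟨div_nonneg hc (by linarith), (div_le_one (by linarith)).2 (by linarith)⟩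

def IsRatioBound (x r : ℕ → ℝ) (j n : ℕ) : Prop :=
  ∀ i, j < i → i ≤ n → r i ∈ Set.Icc (0 : ℝ) 1 ∧ x i ≤ r i * x (i - 1)

section ThreeTermInequality

variable {n j : ℕ} {x b c r : ℕ → ℝ}

theorem IsRatioBound.le_mul_prod (hr : IsRatioBound x r j n) {i : ℕ} (hji : j < i) (hin : i ≤ n) :
    x i ≤ x j * ∏ k ∈ Finset.Icc (j + 1) i, r k := by
  induction i, hji using Nat.le_induction with
  | base => simpa [mul_comm] using (hr (j + 1) (by omega) hin).2
  | succ i hji ih =>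
    obtain ⟨hri, hxi⟩ := hr (i + 1) (by omega) hin
    rw [Finset.prod_Icc_succ_top (by omega)]
    calc x (i + 1) ≤ r (i + 1) * x i := hxi
      _ ≤ r (i + 1) * (x j * ∏ k ∈ Finset.Icc (j + 1) i, r k) :=
        mul_le_mul_of_nonneg_left (ih (by omega)) hri.1
      _ = x j * ((∏ k ∈ Finset.Icc (j + 1) i, r k) * r (i + 1)) := by ring

theorem isRatioBound_div_one_sub (hx : ∀ i, 0 ≤ x i) (hb : ∀ i, 0 ≤ b i) (hc : ∀ i, 0 ≤ c i)
    (hbn : b n = 0) (hcb : ∀ i, j < i → i ≤ n → c i + b i ≤ 1)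
    (hb1 : ∀ i, j < i → i ≤ n → b i < 1)
    (hrec : ∀ i, j < i → i ≤ n → x i ≤ c i * x (i - 1) + b i * x (i + 1))
    (hr : ∀ i, j < i → i ≤ n → r i = c i / (1 - b i)) :
    IsRatioBound x r j n := by
  intro i hji hin
  induction hd : n - i generalizing i with
  | zero =>
    obtain rfl : i = n := by omega
    have hcn := hcb i hji hin
    rw [hr i hji hin, hbn, sub_zero, div_one]
    refine ⟨⟨hc i, by linarith [hb i]⟩, ?_⟩
    simpa [hbn] using hrec i hji hin
  | succ d ih =>
    obtain ⟨hri, hxi⟩ := ih (i + 1) (by omega) (by omega) (by omega)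
    have hnext : x (i + 1) ≤ 1 * x i := by
      rw [Nat.add_sub_cancel] at hxi
      nlinarith [hx i, hri.2]
    rw [hr i hji hin, ← mul_one (b i)]
    exact ⟨div_one_sub_mul_mem_Icc (hc i) (hb i) (hcb i hji hin) (hb1 i hji hin)
        ⟨zero_le_one, le_rfl⟩,
      le_div_one_sub_mul_mul_of_le_add_mul (hrec i hji hin) (hb i) hnext
        (by rw [mul_one]; exact hb1 i hji hin)⟩

theorem IsRatioBound.refine {r' : ℕ → ℝ} (hr : IsRatioBound x r j n) (hb : ∀ i, 0 ≤ b i)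
    (hc : ∀ i, 0 ≤ c i) (hcb : ∀ i, j < i → i ≤ n → c i + b i ≤ 1)
    (hb1 : ∀ i, j < i → i ≤ n → b i < 1)
    (hrec : ∀ i, j < i → i ≤ n → x i ≤ c i * x (i - 1) + b i * x (i + 1))
    (hr' : ∀ i, j < i → i ≤ n → r' i = r i ∨ i < n ∧ r' i = c i / (1 - b i * r (i + 1))) :
    IsRatioBound x r' j n := by
  intro i hji hin
  rcases hr' i hji hin with h | ⟨hin', h⟩
  · rw [h]
    exact hr i hji hin
  · obtain ⟨hρ, hz⟩ := hr (i + 1) (by omega) hin'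
    rw [Nat.add_sub_cancel] at hz
    rw [h]
    exact ⟨div_one_sub_mul_mem_Icc (hc i) (hb i) (hcb i hji hin) (hb1 i hji hin) hρ,
      le_div_one_sub_mul_mul_of_le_add_mul (hrec i hji hin) (hb i) hz
        (mul_lt_one_of_nonneg_of_lt_one_left (hb i) (hb1 i hji hin) hρ.2)⟩

theorem isRatioBound_iterate (ω : ℕ → ℕ → ℝ) (hx : ∀ i, 0 ≤ x i) (hb : ∀ i, 0 ≤ b i)
    (hc : ∀ i, 0 ≤ c i) (hbn : b n = 0) (hcb : ∀ i, j < i → i ≤ n → c i + b i ≤ 1)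
    (hb1 : ∀ i, j < i → i ≤ n → b i < 1)
    (hrec : ∀ i, j < i → i ≤ n → x i ≤ c i * x (i - 1) + b i * x (i + 1))
    (hω1 : ∀ i, j < i → i ≤ n → ω i 1 = c i / (1 - b i))
    (hωa : ∀ i t, j < i → i ≤ n → 2 ≤ t → t ≤ n - 1 → n - t + 1 < i → ω i t = ω i (t - 1))
    (hωb : ∀ i t, j < i → i ≤ n → 2 ≤ t → t ≤ n - 1 → i ≤ n - t + 1 →
      ω i t = c i / (1 - b i * ω (i + 1) (t - 1))) :
    ∀ t, 1 ≤ t → t ≤ n - 1 → IsRatioBound x (fun i => ω i t) j n := by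
  intro t ht
  induction t, ht using Nat.le_induction with
  | base => exact fun _ => isRatioBound_div_one_sub hx hb hc hbn hcb hb1 hrec hω1
  | succ t ht ih =>
    intro htn
    refine (ih (by omega)).refine hb hc hcb hb1 hrec fun i hji hin => ?_
    rcases lt_or_ge (n - (t + 1) + 1) i with h | h
    · exact .inl (hωa i (t + 1) hji hin (by omega) htn h)
    · exact .inr ⟨by omega, hωb i (t + 1) hji hin (by omega) htn h⟩

end ThreeTermInequality

theorem offdiag_bound_lower_triangle_iter_general
    (n m : ℕ)
    (A B C : ℕ → Matrix (Fin m) (Fin m) ℂ)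
    (hBn : B n = 0)
    (hAinv : IsUnit (blockTridiag n m A B C))
    (hC : ∀ i, 1 ≤ i → i ≤ n - 1 → IsUnit (C i))
    (hAi : ∀ i, 1 ≤ i → i ≤ n → IsUnit (A i))
    (hdom : ∀ i, 1 ≤ i → i ≤ n → ‖(A i)⁻¹ * C (i - 1)‖ + ‖(A i)⁻¹ * B i‖ ≤ 1)
    (ω : ℕ → ℝ)
    (hω : ∀ i, 1 ≤ i → i ≤ n → ω i = ‖(A i)⁻¹ * C (i - 1)‖ / (1 - ‖(A i)⁻¹ * B i‖))
    (ω' : ℕ → ℕ → ℝ)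
    (hω'1 : ∀ i, ω' i 1 = ω i)
    (hω'a : ∀ i t, 1 ≤ i → i ≤ n → 2 ≤ t → t ≤ n - 1 → n - t + 1 < i → ω' i t = ω' i (t - 1))
    (hω'b : ∀ i t, 1 ≤ i → i ≤ n → 2 ≤ t → t ≤ n - 1 → i ≤ n - t + 1 →
      ω' i t = ‖(A i)⁻¹ * C (i - 1)‖ / (1 - ‖(A i)⁻¹ * B i‖ * ω' (i + 1) (t - 1)))
    (Z : ℕ → ℕ → Matrix (Fin m) (Fin m) ℂ)
    (hZ : ∀ i j : Fin n, Z ((i : ℕ) + 1) ((j : ℕ) + 1) =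
      Matrix.of fun k l => (blockTridiag n m A B C)⁻¹ (i, k) (j, l)) :
    ∀ t, 1 ≤ t → t ≤ n - 1 → ∀ i j, 1 ≤ j → j < i → i ≤ n →
      ‖Z i j‖ ≤ ‖Z j j‖ * ∏ k ∈ Finset.Icc (j + 1) i, ω' k t := by
  intro t ht1 htn i j hj hji hin
  have hrec : ∀ k, j < k → k ≤ n → ‖Z k j‖ ≤
      ‖(A k)⁻¹ * C (k - 1)‖ * ‖Z (k - 1) j‖ + ‖(A k)⁻¹ * B k‖ * ‖Z (k + 1) j‖ := by
    intro k hjk hkn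
    exact norm_le_of_mul_add_mul_add_mul_eq_zero
      (Matrix.nonsing_inv_mul _ ((Matrix.isUnit_iff_isUnit_det _).mp (hAi k (by omega) hkn)))
      (blockTridiag_inv_block_recurrence hBn hAinv hZ (by omega) hkn hj (by omega) (by omega))
  have hb1 : ∀ k, j < k → k ≤ n → ‖(A k)⁻¹ * B k‖ < 1 := fun k hjk hkn =>
    norm_lt_one_of_isUnit_of_norm_add_le_one
      ((Matrix.isUnit_nonsing_inv_iff.2 (hAi k (by omega) hkn)).mul
        (hC (k - 1) (by omega) (by omega)))
      (hdom k (by omega) hkn)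
  exact isRatioBound_iterate ω' (fun _ => norm_nonneg _) (fun _ => norm_nonneg _)
    (fun _ => norm_nonneg _) (by rw [hBn, mul_zero, norm_zero])
    (fun k hjk hkn => hdom k (by omega) hkn) hb1 hrec
    (fun k hjk hkn => (hω'1 k).trans (hω k (by omega) hkn))
    (fun k s hjk hkn => hω'a k s (by omega) hkn) (fun k s hjk hkn => hω'b k s (by omega) hkn)
    t ht1 htn |>.le_mul_prod hji hin

theorem offdiag_bound_lower_triangle_iter
    (n m : ℕ) (hn : 2 ≤ n) (hm : 1 ≤ m)
    (A B C : ℕ → Matrix (Fin m) (Fin m) ℂ)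
    (hC0 : C 0 = 0) (hBn : B n = 0)
    (hAinv : IsUnit (blockTridiag n m A B C))
    (hB : ∀ i, 1 ≤ i → i ≤ n - 1 → IsUnit (B i))
    (hC : ∀ i, 1 ≤ i → i ≤ n - 1 → IsUnit (C i))
    (hAi : ∀ i, 1 ≤ i → i ≤ n → IsUnit (A i))
    (hdom : ∀ i, 1 ≤ i → i ≤ n → ‖(A i)⁻¹ * C (i - 1)‖ + ‖(A i)⁻¹ * B i‖ ≤ 1)
    (hB1 : ‖(A 1)⁻¹ * B 1‖ < 1)
    (hCn : ‖(A n)⁻¹ * C (n - 1)‖ < 1)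
    (ω : ℕ → ℝ)
    (hω : ∀ i, 1 ≤ i → i ≤ n → ω i = ‖(A i)⁻¹ * C (i - 1)‖ / (1 - ‖(A i)⁻¹ * B i‖))
    (ω' : ℕ → ℕ → ℝ)
    (hω'1 : ∀ i, ω' i 1 = ω i)
    (hω'n : ∀ t, ω' (n + 1) t = 0)
    (hω'a : ∀ i t, 1 ≤ i → i ≤ n → 2 ≤ t → t ≤ n - 1 → n - t + 1 < i → ω' i t = ω' i (t - 1))
    (hω'b : ∀ i t, 1 ≤ i → i ≤ n → 2 ≤ t → t ≤ n - 1 → i ≤ n - t + 1 →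
      ω' i t = ‖(A i)⁻¹ * C (i - 1)‖ / (1 - ‖(A i)⁻¹ * B i‖ * ω' (i + 1) (t - 1)))
    (Z : ℕ → ℕ → Matrix (Fin m) (Fin m) ℂ)
    (hZ : ∀ i j : Fin n, Z ((i : ℕ) + 1) ((j : ℕ) + 1) =
      Matrix.of fun k l => (blockTridiag n m A B C)⁻¹ (i, k) (j, l)) :
    ∀ t, 1 ≤ t → t ≤ n - 1 → ∀ i j, 1 ≤ j → j < i → i ≤ n →
      ‖Z i j‖ ≤ ‖Z j j‖ * ∏ k ∈ Finset.Icc (j + 1) i, ω' k t :=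
  offdiag_bound_lower_triangle_iter_general n m A B C hBn hAinv hC hAi hdom ω hω ω' hω'1 hω'a hω'b Z
    hZ
end
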